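/- Let X be a nonempty topological space, k ≥ 1, and let H_1, …, H_k : X → ℝ be continuous functions such that 0 ≤ H_j ≤ 1 for each j, the supports of the H_j are pairwise disjoint, each H_j attains the value 1 at some point of X, and there exists a point of X at which all the H_j vanish. Then for every τ = (τ_1, …, τ_k) ∈ ℝ^k the function H_τ = Σ_{j=1}^k τ_j H_j satisfies osc(H_τ) = osc_0(τ); in other words, the linear map τ ↦ H_τ is an isometric embedding of (ℝ^k, osc_0) into the continuous bounded functions on X equipped with the oscillation osc. -/

import Mathlib

/-- The oscillation of a real-valued function: `osc f = sup f - inf f`. -/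
noncomputable def oscFun {X : Type*} (f : X → ℝ) : ℝ :=
  sSup (Set.range f) - sInf (Set.range f)

/-- The oscillation of a vector `τ ∈ ℝ^{n+1}`:
`osc τ = max_{j, j'} (τ_j - τ_{j'})`. -/
noncomputable def osc {n : ℕ} (τ : Fin (n + 1) → ℝ) : ℝ :=
  Finset.univ.sup' Finset.univ_nonempty
    (fun p : Fin (n + 1) × Fin (n + 1) => τ p.1 - τ p.2)

/-- `osc_0 : ℝ^k → ℝ` is the restriction of `osc` to `0 ⊕ ℝ^k ⊆ ℝ^{k+1}`,
i.e. `osc_0 (τ_1, …, τ_k) = osc (0, τ_1, …, τ_k)`. -/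
noncomputable def osc₀ {k : ℕ} (τ : Fin k → ℝ) : ℝ :=
  osc (Fin.cons 0 τ)

/-!
At a point `x` at most one bump `H_j` is nonzero, so `H_τ x = τ_j H_j x` lies between `0` and
`τ_j`, hence between the least and the greatest entry of `(0, τ_1, …, τ_k)`. Conversely every
entry of this vector is a value of `H_τ`: `0` at the common zero, `τ_j` where `H_j = 1`. So
`sup H_τ` and `inf H_τ` are the largest and smallest entries, whose difference is `osc_0 τ`.
-/

open Set Finset

theorem osc_eq_sup'_sub_inf' {n : ℕ} (τ : Fin (n + 1) → ℝ) :
    osc τ = univ.sup' univ_nonempty τ - univ.inf' univ_nonempty τ := by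
  apply le_antisymm
  · exact Finset.sup'_le _ _ fun p _ => sub_le_sub (le_sup' τ (mem_univ p.1))
      (inf'_le τ (mem_univ p.2))
  · obtain ⟨i, -, hi⟩ := exists_mem_eq_sup' univ_nonempty τ
    obtain ⟨j, -, hj⟩ := exists_mem_eq_inf' univ_nonempty τ
    rw [hi, hj]
    exact le_sup' (fun p : Fin (n + 1) × Fin (n + 1) => τ p.1 - τ p.2) (mem_univ (i, j))

theorem oscFun_eq_of_isLeast_of_isGreatest {X : Type*} {f : X → ℝ} {a b : ℝ}
    (ha : IsLeast (range f) a) (hb : IsGreatest (range f) b) : oscFun f = b - a := by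
  rw [oscFun, hb.csSup_eq, ha.csInf_eq]

theorem oscFun_eq_osc_of_range_subset {X : Type*} {n : ℕ} {f : X → ℝ} {τ : Fin (n + 1) → ℝ}
    (hmem : range τ ⊆ range f)
    (hbound : range f ⊆ Icc (univ.inf' univ_nonempty τ) (univ.sup' univ_nonempty τ)) :
    oscFun f = osc τ := by
  rw [osc_eq_sup'_sub_inf']
  obtain ⟨i, -, hi⟩ := exists_mem_eq_sup' univ_nonempty τ
  obtain ⟨j, -, hj⟩ := exists_mem_eq_inf' univ_nonempty τ
  refine oscFun_eq_of_isLeast_of_isGreatest ⟨?_, fun y hy => (hbound hy).1⟩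
    ⟨?_, fun y hy => (hbound hy).2⟩
  · exact hj ▸ hmem (mem_range_self j)
  · exact hi ▸ hmem (mem_range_self i)

theorem mul_mem_uIcc_zero_left {c t : ℝ} (ht : t ∈ Icc (0 : ℝ) 1) : c * t ∈ uIcc 0 c := by
  obtain ⟨ht₀, ht₁⟩ := ht
  rcases le_total 0 c with hc | hc
  · exact mem_uIcc.2 (Or.inl ⟨by positivity, by nlinarith⟩)
  · exact mem_uIcc.2 (Or.inr ⟨by nlinarith, by nlinarith⟩)

theorem sum_mul_apply_eq_of_apply_ne_zero {ι X R : Type*} [Fintype ι]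
    [NonUnitalNonAssocSemiring R] {H : ι → X → R}
    (hdisj : Pairwise fun i j => Disjoint (Function.support (H i)) (Function.support (H j)))
    (τ : ι → R) {x : X} {i : ι} (hx : H i x ≠ 0) :
    ∑ j, τ j * H j x = τ i * H i x := by
  refine sum_eq_single_of_mem i (mem_univ i) fun j _ hji => ?_
  rw [Function.notMem_support.1 fun hj => disjoint_left.1 (hdisj hji) hj hx, mul_zero]

section Bumps

variable {X : Type*} {k : ℕ} {H : Fin k → X → ℝ}

theorem cons_zero_mem_range_sum_mul
    (hdisj : Pairwise fun i j => Disjoint (Function.support (H i)) (Function.support (H j)))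
    (hone : ∀ j, ∃ x, H j x = 1) (hzero : ∃ x, ∀ j, H j x = 0)
    (τ : Fin k → ℝ) : range (Fin.cons 0 τ : Fin (k + 1) → ℝ) ⊆ range fun x => ∑ j, τ j * H j x := by
  rintro _ ⟨i, rfl⟩
  induction i using Fin.cases with
  | zero =>
    obtain ⟨x, hx⟩ := hzero
    exact ⟨x, by simp [hx]⟩
  | succ j =>
    obtain ⟨x, hx⟩ := hone j
    refine ⟨x, ?_⟩
    show ∑ j, τ j * H j x = _
    rw [sum_mul_apply_eq_of_apply_ne_zero hdisj τ (hx ▸ one_ne_zero)]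
    simp [hx]

theorem range_sum_mul_subset_Icc
    (hdisj : Pairwise fun i j => Disjoint (Function.support (H i)) (Function.support (H j)))
    (hbdd : ∀ j, ∀ x, 0 ≤ H j x ∧ H j x ≤ 1) (τ : Fin k → ℝ) :
    (range fun x => ∑ j, τ j * H j x) ⊆
      Icc (univ.inf' univ_nonempty (Fin.cons 0 τ : Fin (k + 1) → ℝ))
        (univ.sup' univ_nonempty (Fin.cons 0 τ : Fin (k + 1) → ℝ)) := by
  set g : Fin (k + 1) → ℝ := Fin.cons 0 τ
  have hg : ∀ i, g i ∈ Icc (univ.inf' univ_nonempty g) (univ.sup' univ_nonempty g) :=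
    fun i => ⟨inf'_le g (mem_univ i), le_sup' g (mem_univ i)⟩
  rintro _ ⟨x, rfl⟩
  show ∑ j, τ j * H j x ∈ _
  by_cases hx : ∃ j, H j x ≠ 0
  · obtain ⟨j, hj⟩ := hx
    rw [sum_mul_apply_eq_of_apply_ne_zero hdisj τ hj]
    exact uIcc_subset_Icc (hg 0) (hg j.succ) (mul_mem_uIcc_zero_left (hbdd j x))
  · simp only [not_exists, not_not] at hx
    simp only [hx, mul_zero, sum_const_zero]
    exact hg 0

end Bumps

theorem osc_sum_bump_eq_osc₀_general (X : Type*)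
    (k : ℕ) (H : Fin k → X → ℝ)
    (hbdd : ∀ j, ∀ x, 0 ≤ H j x ∧ H j x ≤ 1)
    (hdisj : ∀ j j', j ≠ j' →
      Disjoint (Function.support (H j)) (Function.support (H j')))
    (hone : ∀ j, ∃ x, H j x = 1)
    (hzero : ∃ x, ∀ j, H j x = 0) :
    ∀ τ : Fin k → ℝ, oscFun (fun x => ∑ j, τ j * H j x) = osc₀ τ := fun τ =>
  oscFun_eq_osc_of_range_subset (cons_zero_mem_range_sum_mul (fun _ _ => hdisj _ _) hone hzero τ)
    (range_sum_mul_subset_Icc (fun _ _ => hdisj _ _) hbdd τ)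

/-- Let `X` be a nonempty topological space and `H_1, …, H_k : X → ℝ` (`k ≥ 1`)
continuous functions with `0 ≤ H_j ≤ 1`, pairwise disjoint supports, each
attaining the value `1`, and all vanishing simultaneously at some point. Then
for every `τ ∈ ℝ^k`, the function `H_τ = Σ_j τ_j H_j` satisfies
`osc (H_τ) = osc_0 (τ)`: the linear map `τ ↦ H_τ` is an isometric embedding of
`(ℝ^k, osc_0)` into the bounded continuous functions on `X` with `osc`. -/
theorem osc_sum_bump_eq_osc₀ (X : Type*) [TopologicalSpace X] [Nonempty X]
    (k : ℕ) (hk : 1 ≤ k) (H : Fin k → X → ℝ)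
    (hcont : ∀ j, Continuous (H j))
    (hbdd : ∀ j, ∀ x, 0 ≤ H j x ∧ H j x ≤ 1)
    (hdisj : ∀ j j', j ≠ j' →
      Disjoint (Function.support (H j)) (Function.support (H j')))
    (hone : ∀ j, ∃ x, H j x = 1)
    (hzero : ∃ x, ∀ j, H j x = 0) :
    ∀ τ : Fin k → ℝ, oscFun (fun x => ∑ j, τ j * H j x) = osc₀ τ :=
  osc_sum_bump_eq_osc₀_general X k H hbdd hdisj hone hzero
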